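/- arXiv:2101.09678 — 5 statements merged into one kernel-verified Lean document; each statement's English description precedes it below -/
import Mathlib

section
/- Let β ∈ (0,1) and let A_{n−k}^{(n)} (1 ≤ k ≤ n ≤ N) be positive, monotone discrete kernels (A_0^{(n)} ≥ A_1^{(n)} ≥ ⋯ ≥ A_{n−1}^{(n)} > 0). Define the complementary kernels by P_0^{(n)} = 1/A_0^{(n)} and P_{n−j}^{(n)} = (1/A_0^{(j)}) Σ_{k=j+1}^{n} (A_{k−j−1}^{(k)} − A_{k−j}^{(k)}) P_{n−k}^{(n)} for 1 ≤ j ≤ n−1. Then all P_{n−j}^{(n)} ≥ 0, and they satisfy the discrete orthogonality identity Σ_{j=k}^{n} P_{n−j}^{(n)} A_{j−k}^{(j)} = 1 for every 1 ≤ k ≤ n. -/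
theorem complementary_kernels_orthogonality (N : ℕ) (A P : ℕ → ℕ → ℝ)
    -- positivity: A_{n-k}^{(n)} = A n k > 0 for 1 ≤ k ≤ n ≤ N
    (hpos : ∀ n k, 1 ≤ k → k ≤ n → n ≤ N → 0 < A n k)
    -- monotonicity A_0^{(n)} ≥ A_1^{(n)} ≥ ⋯, i.e. A n k increasing in k
    (hmono : ∀ n k, 1 ≤ k → k < n → n ≤ N → A n k ≤ A n (k + 1))
    -- complementary kernels: P_0^{(n)} = P n n = 1/A n n
    (hP0 : ∀ n, 1 ≤ n → n ≤ N → P n n = 1 / A n n)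
    -- P_{n-j}^{(n)} = (1/A_0^{(j)}) Σ_{k=j+1}^n (A_{k-j-1}^{(k)} - A_{k-j}^{(k)}) P_{n-k}^{(n)}
    (hPrec : ∀ n j, 1 ≤ j → j < n → n ≤ N →
      P n j = (1 / A j j) * ∑ k ∈ Finset.Icc (j + 1) n, (A k (j + 1) - A k j) * P n k) :
    ∀ n, 1 ≤ n → n ≤ N →
      (∀ j, 1 ≤ j → j ≤ n → 0 ≤ P n j) ∧
      (∀ k, 1 ≤ k → k ≤ n → ∑ j ∈ Finset.Icc k n, P n j * A j k = 1) := by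
  intro n hn1 hnN
  have hPnonneg : ∀ d j, 1 ≤ j → j ≤ n → n - j ≤ d → 0 ≤ P n j := by
    intro d
    induction d with
    | zero =>
      intro j hj1 hjn hd
      have hj : j = n := by omega
      subst hj
      rw [hP0 j hj1 hnN]
      exact div_nonneg zero_le_one (hpos j j hj1 le_rfl hnN).le
    | succ d ih =>
      intro j hj1 hjn hd
      rcases eq_or_lt_of_le hjn with h | h
      · subst h
        rw [hP0 j hj1 hnN]
        exact div_nonneg zero_le_one (hpos j j hj1 le_rfl hnN).le
      · rw [hPrec n j hj1 h hnN]
        apply mul_nonneg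
        · exact div_nonneg zero_le_one (hpos j j hj1 le_rfl (le_trans (le_of_lt h) hnN)).le
        · apply Finset.sum_nonneg
          intro k hk
          rw [Finset.mem_Icc] at hk
          apply mul_nonneg
          · have := hmono k j hj1 (by omega) (by omega)
            linarith
          · exact ih k (by omega) hk.2 (by omega)
  constructor
  · intro j hj1 hjn
    exact hPnonneg (n - j) j hj1 hjn le_rfl
  · have hOrtho : ∀ d k, 1 ≤ k → k ≤ n → n - k ≤ d →
        ∑ j ∈ Finset.Icc k n, P n j * A j k = 1 := by
      intro d
      induction d with
      | zero =>
        intro k hk1 hkn hd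
        have hk : k = n := by omega
        subst hk
        rw [Finset.Icc_self, Finset.sum_singleton, hP0 k hk1 hnN]
        field_simp
        exact div_self (hpos k k hk1 le_rfl hnN).ne'
      | succ d ih =>
        intro k hk1 hkn hd
        rcases eq_or_lt_of_le hkn with h | h
        · subst h
          rw [Finset.Icc_self, Finset.sum_singleton, hP0 k hk1 hnN]
          field_simp
          exact div_self (hpos k k hk1 le_rfl hnN).ne'
        · have hins : Finset.Icc k n = insert k (Finset.Icc (k + 1) n) := by
            ext x; simp [Finset.mem_Icc]; omega
          have hAkk : A k k ≠ 0 :=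
            (hpos k k hk1 le_rfl (le_trans h.le hnN)).ne'
          have hPk : P n k * A k k =
              ∑ j ∈ Finset.Icc (k + 1) n, (A j (k + 1) - A j k) * P n j := by
            rw [hPrec n k hk1 h hnN]
            field_simp
          rw [hins, Finset.sum_insert (by simp), hPk]
          rw [← Finset.sum_add_distrib]
          have : ∀ j ∈ Finset.Icc (k + 1) n,
              (A j (k + 1) - A j k) * P n j + P n j * A j k = P n j * A j (k + 1) := by
            intro j hj; ring
          rw [Finset.sum_congr rfl this]
          exact ih (k + 1) (by omega) (by omega) (by omega)
    intro k hk1 hkn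
    exact hOrtho (n - k) k hk1 hkn le_rfl
end

section
/- Under the hypotheses of the previous item (positive monotone kernels A with complementary kernels P), for any sequence (g^k), Σ_{j=1}^{n} P_{n−j}^{(n)} Σ_{k=1}^{j} A_{j−k}^{(j)} (g^k − g^{k−1}) = g^n − g^0 for all 1 ≤ n ≤ N. -/
open Finset

theorem sum_Icc_Icc_comm_aux {M : Type*} [AddCommMonoid M] (a b : ℕ) (f : ℕ → ℕ → M) :
    (∑ i ∈ Finset.Icc a b, ∑ j ∈ Finset.Icc a i, f i j) =
      ∑ j ∈ Finset.Icc a b, ∑ i ∈ Finset.Icc j b, f i j := by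
  rw [Finset.sum_sigma', Finset.sum_sigma']
  refine sum_nbij' (fun x ↦ ⟨x.2, x.1⟩) (fun x ↦ ⟨x.2, x.1⟩) ?_ ?_ (fun _ _ ↦ rfl) (fun _ _ ↦ rfl)
    (fun _ _ ↦ rfl) <;>
  simp only [Finset.mem_Icc, Sigma.forall, Finset.mem_sigma] <;>
  rintro a b ⟨⟨h₁, h₂⟩, ⟨h₃, h₄⟩⟩ <;>
  omega

theorem telescope_Icc (g : ℕ → ℝ) (n : ℕ) :
    ∑ k ∈ Finset.Icc 1 n, (g k - g (k - 1)) = g n - g 0 := by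
  induction n with
  | zero => simp
  | succ n ih =>
    rw [Finset.sum_Icc_succ_top (by omega)]
    simp only [Nat.add_sub_cancel]
    rw [ih]; ring

theorem complementary_kernels_inversion (N : ℕ) (A P : ℕ → ℕ → ℝ)
    (hpos : ∀ n k, 1 ≤ k → k ≤ n → n ≤ N → 0 < A n k)
    (hmono : ∀ n k, 1 ≤ k → k < n → n ≤ N → A n k ≤ A n (k + 1))
    (hP0 : ∀ n, 1 ≤ n → n ≤ N → P n n = 1 / A n n)
    (hPrec : ∀ n j, 1 ≤ j → j < n → n ≤ N →
      P n j = (1 / A j j) * ∑ k ∈ Finset.Icc (j + 1) n, (A k (j + 1) - A k j) * P n k)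
    (g : ℕ → ℝ) :
    ∀ n, 1 ≤ n → n ≤ N →
      ∑ j ∈ Finset.Icc 1 n, P n j * ∑ k ∈ Finset.Icc 1 j, A j k * (g k - g (k - 1))
        = g n - g 0 := by
  intro n hn1 hnN
  -- key : for 1 ≤ k ≤ n, ∑ j in Icc k n, P n j * A j k = 1
  have key : ∀ m k, 1 ≤ k → k ≤ n → n ≤ k + m →
      ∑ j ∈ Finset.Icc k n, P n j * A j k = 1 := by
    intro m
    induction m with
    | zero =>
      intro k hk1 hkn hnk
      have : k = n := by omega
      subst this
      rw [Finset.Icc_self, Finset.sum_singleton, hP0 k hk1 hnN]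
      field_simp [(hpos k k hk1 le_rfl hnN).ne']
    | succ m ih =>
      intro k hk1 hkn hnk
      rcases eq_or_lt_of_le hkn with h | h
      · subst h
        rw [Finset.Icc_self, Finset.sum_singleton, hP0 k hk1 hnN]
        field_simp [(hpos k k hk1 le_rfl hnN).ne']
      · have hA : A k k ≠ 0 := (hpos k k hk1 le_rfl (by omega)).ne'
        rw [Finset.Icc_eq_cons_Ioc hkn, Finset.sum_cons, ← Finset.Icc_add_one_left_eq_Ioc]
        have hPk := hPrec n k hk1 h hnN
        have : P n k * A k k = ∑ j ∈ Finset.Icc (k + 1) n, (A j (k + 1) - A j k) * P n j := by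
          rw [hPk]; field_simp
        calc P n k * A k k + ∑ j ∈ Finset.Icc (k+1) n, P n j * A j k
            = ∑ j ∈ Finset.Icc (k + 1) n, ((A j (k + 1) - A j k) * P n j + P n j * A j k) := by
              rw [this, Finset.sum_add_distrib]
          _ = ∑ j ∈ Finset.Icc (k + 1) n, P n j * A j (k + 1) := by
              apply Finset.sum_congr rfl; intro j _; ring
          _ = 1 := ih (k + 1) (by omega) (by omega) (by omega)
  have swap :
      ∑ j ∈ Finset.Icc 1 n, P n j * ∑ k ∈ Finset.Icc 1 j, A j k * (g k - g (k - 1))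
        = ∑ k ∈ Finset.Icc 1 n, (∑ j ∈ Finset.Icc k n, P n j * A j k) * (g k - g (k - 1)) := by
    simp_rw [Finset.mul_sum, Finset.sum_mul]
    rw [sum_Icc_Icc_comm_aux 1 n (fun j k => P n j * (A j k * (g k - g (k - 1))))]
    apply Finset.sum_congr rfl; intro k hk
    apply Finset.sum_congr rfl; intro j hj
    ring
  rw [swap]
  have : ∀ k ∈ Finset.Icc 1 n, (∑ j ∈ Finset.Icc k n, P n j * A j k) * (g k - g (k - 1))
      = g k - g (k - 1) := by
    intro k hk
    simp only [Finset.mem_Icc] at hk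
    rw [key n k hk.1 hk.2 (by omega), one_mul]
  rw [Finset.sum_congr rfl this, telescope_Icc]
end

section
/- Let β ∈ (0,1) and suppose discrete kernels A_{n−k}^{(n)} satisfy the lower bound A_{n−k}^{(n)} ≥ (1/π_A) ∫_{t_{k−1}}^{t_k} ω_{1−β}(t_n − s)/τ_k ds for some π_A > 0, together with positivity and monotonicity. Then the complementary kernels satisfy 0 ≤ P_{n−j}^{(n)} ≤ π_A Γ(2−β) τ_j^β and Σ_{j=1}^{n} P_{n−j}^{(n)} ω_{1−β}(t_j) ≤ π_A for all 1 ≤ j ≤ n ≤ N. -/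
open MeasureTheory intervalIntegral

theorem complementary_kernels_bounds (β : ℝ) (hβ : β ∈ Set.Ioo (0:ℝ) 1)
    (N : ℕ) (t : ℕ → ℝ) (ht0 : t 0 = 0) (hmesh : ∀ k, k < N → t k < t (k + 1))
    (πA : ℝ) (hπA : 0 < πA) (A P : ℕ → ℕ → ℝ)
    (hpos : ∀ n k, 1 ≤ k → k ≤ n → n ≤ N → 0 < A n k)
    (hmono : ∀ n k, 1 ≤ k → k < n → n ≤ N → A n k ≤ A n (k + 1))
    -- A2: lower bound of the kernels by the exact L1 averages
    (hA2 : ∀ n k, 1 ≤ k → k ≤ n → n ≤ N →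
      (1 / πA) * ((1 / (t k - t (k - 1))) *
        ∫ s in (t (k - 1))..(t k), (t n - s) ^ (-β) / Real.Gamma (1 - β)) ≤ A n k)
    (hP0 : ∀ n, 1 ≤ n → n ≤ N → P n n = 1 / A n n)
    (hPrec : ∀ n j, 1 ≤ j → j < n → n ≤ N →
      P n j = (1 / A j j) * ∑ k ∈ Finset.Icc (j + 1) n, (A k (j + 1) - A k j) * P n k) :
    ∀ n, 1 ≤ n → n ≤ N →
      (∀ j, 1 ≤ j → j ≤ n →
        0 ≤ P n j ∧ P n j ≤ πA * Real.Gamma (2 - β) * (t j - t (j - 1)) ^ β) ∧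
      (∑ j ∈ Finset.Icc 1 n, P n j * ((t j) ^ (-β) / Real.Gamma (1 - β)) ≤ πA) := by
  obtain ⟨hβ0, hβ1⟩ := hβ
  have hΓ1 : 0 < Real.Gamma (1 - β) := Real.Gamma_pos_of_pos (by linarith)
  have hΓ2eq : Real.Gamma (2 - β) = (1 - β) * Real.Gamma (1 - β) := by
    have h2 : (2:ℝ) - β = (1 - β) + 1 := by ring
    rw [h2, Real.Gamma_add_one (by linarith)]
  have hΓ2 : 0 < Real.Gamma (2 - β) := by
    rw [hΓ2eq]; exact mul_pos (by linarith) hΓ1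
  have hmt : ∀ i j : ℕ, i ≤ j → j ≤ N → t i ≤ t j := by
    intro i j hij hjN
    induction j with
    | zero => simp_all
    | succ m ih =>
      rcases Nat.lt_or_ge i (m + 1) with h | h
      · exact le_trans (ih (by omega) (by omega)) (hmesh m (by omega)).le
      · have : i = m + 1 := by omega
        simp [this]
  have hτpos : ∀ j : ℕ, 1 ≤ j → j ≤ N → 0 < t j - t (j - 1) := by
    intro j h1 h2
    have := hmesh (j - 1) (by omega)
    have hj : j - 1 + 1 = j := by omega
    rw [hj] at this; linarith
  have htpos : ∀ j : ℕ, 1 ≤ j → j ≤ N → 0 < t j := by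
    intro j h1 h2
    have h01 : t 0 < t 1 := hmesh 0 (by omega)
    have := hmt 1 j h1 h2
    linarith [ht0 ▸ h01]
  intro n hn1 hnN
  -- nonnegativity of P n j
  have nonneg : ∀ j, 1 ≤ j → j ≤ n → 0 ≤ P n j := by
    have key : ∀ d j, 1 ≤ j → j ≤ n → n - j ≤ d → 0 ≤ P n j := by
      intro d
      induction d with
      | zero =>
        intro j h1 h2 hd
        have hj : j = n := by omega
        subst hj
        rw [hP0 j h1 hnN]
        have := hpos j j h1 le_rfl hnN
        positivity
      | succ d ih =>
        intro j h1 h2 hd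
        rcases eq_or_lt_of_le h2 with h | h
        · subst h
          rw [hP0 j h1 hnN]
          have := hpos j j h1 le_rfl hnN
          positivity
        · rw [hPrec n j h1 h hnN]
          have hAjj := hpos j j h1 le_rfl (le_trans h2 hnN)
          apply mul_nonneg (by positivity)
          apply Finset.sum_nonneg
          intro k hk
          rw [Finset.mem_Icc] at hk
          have hkN : k ≤ N := le_trans hk.2 hnN
          refine mul_nonneg (sub_nonneg.2 (hmono k j h1 (by omega) hkN)) ?_
          exact ih k (by omega) hk.2 (by omega)
    intro j h1 h2; exact key (n - j) j h1 h2 le_rfl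
  have hAnn := hpos n n hn1 le_rfl hnN
  -- sum identity: ∑_{k=j}^n A k j * P n k = 1
  have Sid : ∀ j, 1 ≤ j → j ≤ n → (∑ k ∈ Finset.Icc j n, A k j * P n k) = 1 := by
    have key : ∀ d j, 1 ≤ j → j ≤ n → n - j ≤ d →
        (∑ k ∈ Finset.Icc j n, A k j * P n k) = 1 := by
      intro d
      induction d with
      | zero =>
        intro j h1 h2 hd
        have hj : j = n := by omega
        subst hj
        rw [Finset.Icc_self, Finset.sum_singleton, hP0 j h1 hnN]
        field_simp
      | succ d ih =>
        intro j h1 h2 hd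
        rcases eq_or_lt_of_le h2 with h | h
        · subst h
          rw [Finset.Icc_self, Finset.sum_singleton, hP0 j h1 hnN]
          field_simp
        · have hAjj := hpos j j h1 le_rfl (le_trans h2 hnN)
          have hIcc : Finset.Icc j n = insert j (Finset.Ioc j n) :=
            (Finset.Ioc_insert_left h2).symm
          rw [hIcc, Finset.sum_insert (by simp), hPrec n j h1 h hnN]
          have hIoc : Finset.Ioc j n = Finset.Icc (j + 1) n := by
            ext x; simp only [Finset.mem_Ioc, Finset.mem_Icc]; omega
          rw [hIoc]
          have hcomb : A j j * ((1 / A j j) *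
              ∑ k ∈ Finset.Icc (j + 1) n, (A k (j + 1) - A k j) * P n k)
              = ∑ k ∈ Finset.Icc (j + 1) n, (A k (j + 1) - A k j) * P n k := by
            field_simp
          rw [hcomb, ← Finset.sum_add_distrib]
          have : ∀ k ∈ Finset.Icc (j + 1) n,
              (A k (j + 1) - A k j) * P n k + A k j * P n k = A k (j + 1) * P n k := by
            intro k _; ring
          rw [Finset.sum_congr rfl this]
          exact ih (j + 1) (by omega) h (by omega)
    intro j h1 h2; exact key (n - j) j h1 h2 le_rfl
  -- lower bound for A j j
  have Ajj_lb : ∀ j : ℕ, 1 ≤ j → j ≤ N →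
      (1 / πA) * ((t j - t (j - 1)) ^ (-β) / Real.Gamma (2 - β)) ≤ A j j := by
    intro j h1 h2
    have h := hA2 j j h1 le_rfl h2
    have hτ : 0 < t j - t (j - 1) := hτpos j h1 h2
    have hI : (∫ s in (t (j - 1))..(t j), (t j - s) ^ (-β) / Real.Gamma (1 - β))
        = (t j - t (j - 1)) ^ (1 - β) / ((1 - β) * Real.Gamma (1 - β)) := by
      rw [intervalIntegral.integral_div,
        intervalIntegral.integral_comp_sub_left (fun u => u ^ (-β)) (t j)]
      rw [integral_rpow (Or.inl (by linarith))]
      rw [sub_self, Real.zero_rpow (by intro hc; apply absurd hc; intro hc2; linarith : -β + 1 ≠ 0)]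
      rw [show -β + 1 = 1 - β by ring]
      field_simp
      simp
    rw [hI] at h
    have hrw : (1 / πA) * ((1 / (t j - t (j - 1))) *
        ((t j - t (j - 1)) ^ (1 - β) / ((1 - β) * Real.Gamma (1 - β))))
        = (1 / πA) * ((t j - t (j - 1)) ^ (-β) / Real.Gamma (2 - β)) := by
      have h1' : (t j - t (j - 1)) ^ (1 - β)
          = (t j - t (j - 1)) ^ (-β) * (t j - t (j - 1)) := by
        rw [show (1:ℝ) - β = -β + 1 by ring, Real.rpow_add hτ, Real.rpow_one]
      rw [h1', hΓ2eq]
      field_simp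
    rw [hrw] at h
    exact h
  -- upper bound for P n j
  have Pub : ∀ j, 1 ≤ j → j ≤ n →
      P n j ≤ πA * Real.Gamma (2 - β) * (t j - t (j - 1)) ^ β := by
    intro j h1 h2
    have hjN : j ≤ N := le_trans h2 hnN
    have hτ : 0 < t j - t (j - 1) := hτpos j h1 hjN
    have hApos := hpos j j h1 le_rfl hjN
    have hterm : A j j * P n j ≤ 1 := by
      rw [← Sid j h1 h2]
      refine Finset.single_le_sum (f := fun k => A k j * P n k) ?_ ?_
      · intro k hk
        rw [Finset.mem_Icc] at hk
        exact mul_nonneg (hpos k j h1 hk.1 (le_trans hk.2 hnN)).le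
          (nonneg k (by omega) hk.2)
      · rw [Finset.mem_Icc]; exact ⟨le_rfl, h2⟩
    have hP1 : P n j ≤ 1 / A j j := by
      rw [le_div_iff₀ hApos]; linarith [hterm, mul_comm (A j j) (P n j)]
    have hlb := Ajj_lb j h1 hjN
    have hlbpos : 0 < (1 / πA) * ((t j - t (j - 1)) ^ (-β) / Real.Gamma (2 - β)) := by
      have := Real.rpow_pos_of_pos hτ (-β)
      positivity
    have h2' : 1 / A j j ≤ 1 / ((1 / πA) * ((t j - t (j - 1)) ^ (-β) / Real.Gamma (2 - β))) :=
      one_div_le_one_div_of_le hlbpos hlb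
    have heq : 1 / ((1 / πA) * ((t j - t (j - 1)) ^ (-β) / Real.Gamma (2 - β)))
        = πA * Real.Gamma (2 - β) * (t j - t (j - 1)) ^ β := by
      have hb : (0:ℝ) < (t j - t (j - 1)) ^ β := Real.rpow_pos_of_pos hτ β
      rw [Real.rpow_neg hτ.le]
      field_simp
    rw [heq] at h2'
    linarith
  refine ⟨fun j h1 h2 => ⟨nonneg j h1 h2, Pub j h1 h2⟩, ?_⟩
  -- final sum bound
  have hA1_lb : ∀ j : ℕ, 1 ≤ j → j ≤ N →
      (t j) ^ (-β) / Real.Gamma (1 - β) ≤ πA * A j 1 := by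
    intro j h1 h2
    have h := hA2 j 1 le_rfl h1 h2
    have hτ1 : 0 < t 1 - t 0 := by have := hmesh 0 (by omega); linarith
    have ht1j : t 1 ≤ t j := hmt 1 j h1 h2
    have htj : 0 < t j := htpos j h1 h2
    -- integrability
    have hint : IntervalIntegrable (fun s => (t j - s) ^ (-β) / Real.Gamma (1 - β))
        volume (t 0) (t 1) := by
      have h0 : IntervalIntegrable (fun u : ℝ => u ^ (-β)) volume (t j - t 0) (t j - t 1) :=
        intervalIntegral.intervalIntegrable_rpow' (by linarith)
      have h1' := (h0.comp_sub_left (t j)).div_const (Real.Gamma (1 - β))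
      simpa using h1'
    have hconst : IntervalIntegrable (fun _ : ℝ => (t j) ^ (-β) / Real.Gamma (1 - β))
        volume (t 0) (t 1) := intervalIntegrable_const
    have hae : (fun _ : ℝ => (t j) ^ (-β) / Real.Gamma (1 - β))
        ≤ᵐ[volume.restrict (Set.Icc (t 0) (t 1))]
        (fun s => (t j - s) ^ (-β) / Real.Gamma (1 - β)) := by
      have hne : ∀ᵐ s ∂(volume : Measure ℝ), s ≠ t 1 := by
        rw [MeasureTheory.ae_iff]
        have : {s : ℝ | ¬ s ≠ t 1} = {t 1} := by ext x; simp
        rw [this]; exact measure_singleton _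
      have hne' : ∀ᵐ s ∂(volume.restrict (Set.Icc (t 0) (t 1))), s ≠ t 1 :=
        hne.filter_mono (MeasureTheory.ae_mono Measure.restrict_le_self)
      filter_upwards [MeasureTheory.ae_restrict_mem measurableSet_Icc, hne'] with s hs hsne
      have hs1 : s < t 1 := lt_of_le_of_ne hs.2 hsne
      have hpos' : 0 < t j - s := by linarith
      have hle : t j - s ≤ t j := by rw [ht0] at hs; linarith [hs.1]
      have := Real.rpow_le_rpow_of_nonpos hpos' hle (by linarith : -β ≤ 0)
      exact div_le_div_of_nonneg_right this hΓ1.le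
    have hmono' := intervalIntegral.integral_mono_ae_restrict
      (le_of_lt (by linarith : t 0 < t 1)) hconst hint hae
    rw [intervalIntegral.integral_const, smul_eq_mul] at hmono'
    -- combine
    have hπ' : (1 / πA) * ((1 / (t 1 - t 0)) *
        ∫ s in (t 0)..(t 1), (t j - s) ^ (-β) / Real.Gamma (1 - β)) ≤ A j 1 := by
      simpa using h
    have hstep : (t j) ^ (-β) / Real.Gamma (1 - β) ≤
        (1 / (t 1 - t 0)) * ∫ s in (t 0)..(t 1), (t j - s) ^ (-β) / Real.Gamma (1 - β) := by
      calc (t j) ^ (-β) / Real.Gamma (1 - β)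
          = (1 / (t 1 - t 0)) * ((t 1 - t 0) * ((t j) ^ (-β) / Real.Gamma (1 - β))) := by
            field_simp
        _ ≤ (1 / (t 1 - t 0)) * ∫ s in (t 0)..(t 1), (t j - s) ^ (-β) / Real.Gamma (1 - β) := by
            apply mul_le_mul_of_nonneg_left hmono' (by positivity)
    calc (t j) ^ (-β) / Real.Gamma (1 - β)
        ≤ (1 / (t 1 - t 0)) * ∫ s in (t 0)..(t 1), (t j - s) ^ (-β) / Real.Gamma (1 - β) :=
          hstep
      _ ≤ πA * A j 1 := by
          rw [← mul_le_mul_iff_right₀ (by positivity : (0:ℝ) < 1 / πA)]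
          calc (1 / πA) * ((1 / (t 1 - t 0)) *
              ∫ s in (t 0)..(t 1), (t j - s) ^ (-β) / Real.Gamma (1 - β)) ≤ A j 1 := hπ'
            _ = (1 / πA) * (πA * A j 1) := by field_simp
  calc ∑ j ∈ Finset.Icc 1 n, P n j * ((t j) ^ (-β) / Real.Gamma (1 - β))
      ≤ ∑ j ∈ Finset.Icc 1 n, P n j * (πA * A j 1) := by
        apply Finset.sum_le_sum
        intro j hj
        rw [Finset.mem_Icc] at hj
        exact mul_le_mul_of_nonneg_left (hA1_lb j hj.1 (le_trans hj.2 hnN))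
          (nonneg j hj.1 hj.2)
    _ = πA * ∑ j ∈ Finset.Icc 1 n, A j 1 * P n j := by
        rw [Finset.mul_sum]; apply Finset.sum_congr rfl; intro j _; ring
    _ = πA := by rw [Sid 1 le_rfl hn1, mul_one]
end

section
/- In the discrete setting, if the kernels A_{n−k}^{(n)} are positive and monotone (A1) and the discrete fractional derivative is (D_τ^β g)^{n−θ} = Σ_{k=1}^{n} A_{n−k}^{(n)} (g^k − g^{k−1}) for sequences of real numbers g^k, then with θ = 0 the inequality g^n · Σ_{k=1}^{n} A_{n−k}^{(n)}(g^k − g^{k−1}) ≥ (1/2) Σ_{k=1}^{n} A_{n−k}^{(n)}((g^k)² − (g^{k−1})²) holds for each n. -/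
lemma abel_icc (b c : ℕ → ℝ) :
    ∀ n, 1 ≤ n →
      ∑ k ∈ Finset.Icc 1 n, b k * (c (k - 1) - c k)
        = b 1 * c 0 - b n * c n + ∑ k ∈ Finset.Icc 1 (n - 1), (b (k + 1) - b k) * c k := by
  intro n hn
  induction n, hn using Nat.le_induction with
  | base => simp; ring
  | succ n hn ih =>
    rw [Finset.sum_Icc_succ_top (by omega : 1 ≤ n + 1), ih]
    have h1 : n + 1 - 1 = n := by omega
    rw [h1]
    have h2 : Finset.Icc 1 n = insert n (Finset.Icc 1 (n - 1)) := by
      ext x; simp [Finset.mem_Icc, Finset.mem_insert]; omega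
    rw [h2, Finset.sum_insert (by simp; omega)]
    have h3 : n - 1 + 1 = n := by omega
    ring

theorem discrete_product_inequality (N : ℕ) (A : ℕ → ℕ → ℝ)
    (hpos : ∀ n k, 1 ≤ k → k ≤ n → n ≤ N → 0 < A n k)
    (hmono : ∀ n k, 1 ≤ k → k < n → n ≤ N → A n k ≤ A n (k + 1))
    (g : ℕ → ℝ) :
    ∀ n, 1 ≤ n → n ≤ N →
      g n * ∑ k ∈ Finset.Icc 1 n, A n k * (g k - g (k - 1))
        ≥ (1 / 2) * ∑ k ∈ Finset.Icc 1 n, A n k * ((g k) ^ 2 - (g (k - 1)) ^ 2) := by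
  intro n hn hnN
  set c : ℕ → ℝ := fun k => (g n - g k) ^ 2 with hc
  have key : ∑ k ∈ Finset.Icc 1 n, A n k * (c (k - 1) - c k)
      = 2 * g n * (∑ k ∈ Finset.Icc 1 n, A n k * (g k - g (k - 1)))
        - ∑ k ∈ Finset.Icc 1 n, A n k * ((g k) ^ 2 - (g (k - 1)) ^ 2) := by
    rw [Finset.mul_sum, ← Finset.sum_sub_distrib]
    apply Finset.sum_congr rfl
    intro k _
    simp only [hc]; ring
  have habel := abel_icc (A n) c n hn
  have hcn : c n = 0 := by simp [hc]
  have hnonneg : (0:ℝ) ≤ ∑ k ∈ Finset.Icc 1 n, A n k * (c (k - 1) - c k) := by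
    rw [habel, hcn]
    have h1 : 0 ≤ A n 1 * c 0 := by
      apply mul_nonneg (le_of_lt (hpos n 1 le_rfl hn hnN))
      positivity
    have h2 : 0 ≤ ∑ k ∈ Finset.Icc 1 (n - 1), (A n (k + 1) - A n k) * c k := by
      apply Finset.sum_nonneg
      intro k hk
      simp only [Finset.mem_Icc] at hk
      apply mul_nonneg
      · have := hmono n k hk.1 (by omega) hnN
        linarith
      · positivity
    linarith
  rw [key] at hnonneg
  linarith
end

section
/- Let (v^k), (w^k) be nonnegative sequences with v⁰ = w⁰ = 0, let A_{n−k}^{(n)} be positive monotone kernels with complementary kernels P, and suppose Σ_{k=1}^{n} A_{n−k}^{(n)} ∇_τ[(v^k)² + (w^k)²] ≤ (v^n + w^n) g^n for all 1 ≤ n ≤ N, where g^n ≥ 0 (the Grönwall inequality with λ ≡ 0 and θ = 0). Then v^n + w^n ≤ 2 max_{1≤k≤n} Σ_{j=1}^{k} P_{k−j}^{(k)} g^j for all 1 ≤ n ≤ N. -/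
theorem discrete_gronwall_lambda_zero (N : ℕ) (A P : ℕ → ℕ → ℝ) (v w g : ℕ → ℝ)
    (hv : ∀ k, 0 ≤ v k) (hw : ∀ k, 0 ≤ w k) (hg : ∀ k, 0 ≤ g k)
    (hv0 : v 0 = 0) (hw0 : w 0 = 0)
    (hpos : ∀ n k, 1 ≤ k → k ≤ n → n ≤ N → 0 < A n k)
    (hmono : ∀ n k, 1 ≤ k → k < n → n ≤ N → A n k ≤ A n (k + 1))
    (hP0 : ∀ n, 1 ≤ n → n ≤ N → P n n = 1 / A n n)
    (hPrec : ∀ n j, 1 ≤ j → j < n → n ≤ N →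
      P n j = (1 / A j j) * ∑ k ∈ Finset.Icc (j + 1) n, (A k (j + 1) - A k j) * P n k)
    (hineq : ∀ n, 1 ≤ n → n ≤ N →
      ∑ k ∈ Finset.Icc 1 n, A n k *
          (((v k) ^ 2 + (w k) ^ 2) - ((v (k - 1)) ^ 2 + (w (k - 1)) ^ 2))
        ≤ (v n + w n) * g n) :
    ∀ n, (hn : 1 ≤ n) → n ≤ N →
      v n + w n ≤ 2 * (Finset.Icc 1 n).sup' (Finset.nonempty_Icc.mpr hn)
        (fun m => ∑ j ∈ Finset.Icc 1 m, P m j * g j) := by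
  set E : ℕ → ℝ := fun k => (v k) ^ 2 + (w k) ^ 2 with hE
  -- nonnegativity of P
  have hPnonneg : ∀ n, n ≤ N → ∀ d k, k + d = n → 1 ≤ k → 0 ≤ P n k := by
    intro n hn d
    induction d using Nat.strong_induction_on with
    | _ d ih =>
      intro k hkd hk1
      rcases Nat.eq_zero_or_pos d with hd0 | hdpos
      · subst hd0
        simp only [Nat.add_zero] at hkd
        subst hkd
        rw [hP0 k hk1 hn]
        have := hpos k k hk1 le_rfl hn
        positivity
      · have hkn : k < n := by omega
        rw [hPrec n k hk1 hkn hn]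
        apply mul_nonneg
        · have := hpos k k hk1 le_rfl (by omega)
          positivity
        · apply Finset.sum_nonneg
          intro j hj
          simp only [Finset.mem_Icc] at hj
          apply mul_nonneg
          · have := hmono j k hk1 (by omega) (by omega)
            linarith
          · exact ih (n - j) (by omega) j (by omega) (by omega)
  have hPnn : ∀ n k, 1 ≤ k → k ≤ n → n ≤ N → 0 ≤ P n k := fun n k h1 h2 h3 =>
    hPnonneg n h3 (n - k) k (by omega) h1
  -- the complementary identity
  have hunit : ∀ n, 1 ≤ n → n ≤ N → ∀ d k, k + d = n → 1 ≤ k →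
      ∑ j ∈ Finset.Icc k n, P n j * A j k = 1 := by
    intro n hn1 hn d
    induction d with
    | zero =>
      intro k hkd hk1
      simp only [Nat.add_zero] at hkd
      subst hkd
      rw [Finset.Icc_self, Finset.sum_singleton, hP0 k hk1 hn]
      field_simp [(hpos k k hk1 le_rfl hn).ne']
    | succ d ih =>
      intro k hkd hk1
      have hkn : k < n := by omega
      have hsplit : Finset.Icc k n = insert k (Finset.Icc (k + 1) n) := by
        ext x
        simp only [Finset.mem_Icc, Finset.mem_insert]
        omega
      rw [hsplit, Finset.sum_insert (by simp)]
      have hA : A k k ≠ 0 := (hpos k k hk1 le_rfl (by omega)).ne'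
      have hPk : P n k * A k k =
          ∑ j ∈ Finset.Icc (k + 1) n, (A j (k + 1) - A j k) * P n j := by
        rw [hPrec n k hk1 hkn hn]
        field_simp
      have hrest := ih (k + 1) (by omega) (by omega)
      calc P n k * A k k + ∑ j ∈ Finset.Icc (k + 1) n, P n j * A j k
          = ∑ j ∈ Finset.Icc (k + 1) n, ((A j (k + 1) - A j k) * P n j + P n j * A j k) := by
            rw [hPk, Finset.sum_add_distrib]
        _ = ∑ j ∈ Finset.Icc (k + 1) n, P n j * A j (k + 1) := by
            apply Finset.sum_congr rfl; intro j _; ring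
        _ = 1 := hrest
  -- telescoping
  have htel : ∀ n, ∑ k ∈ Finset.Icc 1 n, (E k - E (k - 1)) = E n := by
    intro n
    induction n with
    | zero => simp [hE, hv0, hw0]
    | succ n ihn =>
      rw [Finset.sum_Icc_succ_top (by omega), ihn]
      simp
  -- key estimate
  have key : ∀ n, 1 ≤ n → n ≤ N →
      E n ≤ ∑ j ∈ Finset.Icc 1 n, P n j * ((v j + w j) * g j) := by
    intro n hn1 hn
    have heq : E n = ∑ j ∈ Finset.Icc 1 n, P n j *
        (∑ k ∈ Finset.Icc 1 j, A j k * (E k - E (k - 1))) := by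
      have hswap : ∑ j ∈ Finset.Icc 1 n, ∑ k ∈ Finset.Icc 1 j, P n j * (A j k * (E k - E (k - 1)))
          = ∑ k ∈ Finset.Icc 1 n, ∑ j ∈ Finset.Icc k n, P n j * (A j k * (E k - E (k - 1))) := by
        apply Finset.sum_comm'
        intro j k
        simp only [Finset.mem_Icc]
        omega
      calc E n = ∑ k ∈ Finset.Icc 1 n, (E k - E (k - 1)) := (htel n).symm
        _ = ∑ k ∈ Finset.Icc 1 n, (∑ j ∈ Finset.Icc k n, P n j * A j k) * (E k - E (k - 1)) := by
            apply Finset.sum_congr rfl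
            intro k hk
            simp only [Finset.mem_Icc] at hk
            rw [hunit n hn1 hn (n - k) k (by omega) hk.1, one_mul]
        _ = ∑ k ∈ Finset.Icc 1 n, ∑ j ∈ Finset.Icc k n, P n j * (A j k * (E k - E (k - 1))) := by
            apply Finset.sum_congr rfl
            intro k _
            rw [Finset.sum_mul]
            apply Finset.sum_congr rfl
            intro j _; ring
        _ = ∑ j ∈ Finset.Icc 1 n, ∑ k ∈ Finset.Icc 1 j, P n j * (A j k * (E k - E (k - 1))) :=
            hswap.symm
        _ = ∑ j ∈ Finset.Icc 1 n, P n j * (∑ k ∈ Finset.Icc 1 j, A j k * (E k - E (k - 1))) := by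
            apply Finset.sum_congr rfl
            intro j _
            rw [Finset.mul_sum]
    rw [heq]
    apply Finset.sum_le_sum
    intro j hj
    simp only [Finset.mem_Icc] at hj
    exact mul_le_mul_of_nonneg_left (hineq j hj.1 (le_trans hj.2 hn))
      (hPnn n j hj.1 hj.2 hn)
  -- conclusion
  intro n hn1 hn
  set ne1 : (Finset.Icc 1 n).Nonempty := Finset.nonempty_Icc.mpr hn1
  set S : ℕ → ℝ := fun m => ∑ j ∈ Finset.Icc 1 m, P m j * g j with hS
  set c : ℝ := (Finset.Icc 1 n).sup' ne1 (fun m => v m + w m) with hc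
  obtain ⟨n₀, hn₀mem, hceq⟩ := Finset.exists_mem_eq_sup' ne1 (fun m => v m + w m)
  simp only [Finset.mem_Icc] at hn₀mem
  have hn₀N : n₀ ≤ N := le_trans hn₀mem.2 hn
  have hsupS : S n₀ ≤ (Finset.Icc 1 n).sup' ne1 S :=
    Finset.le_sup' S (Finset.mem_Icc.mpr hn₀mem)
  have hsup0 : 0 ≤ (Finset.Icc 1 n).sup' ne1 S := by
    refine le_trans ?_ (Finset.le_sup' S (Finset.mem_Icc.mpr ⟨hn1, le_rfl⟩))
    apply Finset.sum_nonneg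
    intro j hj
    simp only [Finset.mem_Icc] at hj
    exact mul_nonneg (hPnn n j hj.1 hj.2 hn) (hg j)
  have hvwc : v n + w n ≤ c := by
    have := Finset.le_sup' (fun m => v m + w m) (Finset.mem_Icc.mpr ⟨hn1, le_rfl⟩)
    exact this
  rcases le_or_gt c 0 with hc0 | hc0
  · linarith
  · -- c > 0
    have h1 : c ^ 2 ≤ 2 * E n₀ := by
      rw [hc, hceq]
      simp only [hE]
      nlinarith [sq_nonneg (v n₀ - w n₀)]
    have h2 := key n₀ hn₀mem.1 hn₀N
    have h3 : ∑ j ∈ Finset.Icc 1 n₀, P n₀ j * ((v j + w j) * g j) ≤ c * S n₀ := by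
      rw [hS]
      simp only
      rw [Finset.mul_sum]
      apply Finset.sum_le_sum
      intro j hj
      simp only [Finset.mem_Icc] at hj
      have hjc : v j + w j ≤ c := by
        have := Finset.le_sup' (fun m => v m + w m)
          (Finset.mem_Icc.mpr ⟨hj.1, le_trans hj.2 hn₀mem.2⟩)
        exact this
      have hPj : 0 ≤ P n₀ j := hPnn n₀ j hj.1 hj.2 hn₀N
      have : P n₀ j * ((v j + w j) * g j) ≤ P n₀ j * (c * g j) := by
        apply mul_le_mul_of_nonneg_left _ hPj
        exact mul_le_mul_of_nonneg_right hjc (hg j)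
      linarith [this]
    have hfinal : c ^ 2 ≤ 2 * (c * (Finset.Icc 1 n).sup' ne1 S) := by
      calc c ^ 2 ≤ 2 * E n₀ := h1
        _ ≤ 2 * (c * S n₀) := by linarith
        _ ≤ 2 * (c * (Finset.Icc 1 n).sup' ne1 S) := by nlinarith
    have : c ≤ 2 * (Finset.Icc 1 n).sup' ne1 S := by nlinarith
    exact le_trans hvwc this
end
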